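/- arXiv:1212.0294 — 2 statements merged into one kernel-verified Lean document; each statement's English description precedes it below -/
import Mathlib

section
/- For a positive integer y set ỹ = y/2 if y is even and ỹ = y if y is odd. Let T⁰ be the set of positive non-square integers d for which there exist integers y ≥ 1, x with 0 ≤ x < y and gcd(x, y) = 1, and a > ỹ such that |(a·y + x)² − d·y²| = 1. Then there is a constant C such that Σ_{d ∈ T⁰} d^{−s} ≤ C for every real s > 1; in particular Σ_{d ∈ T⁰} 1/d converges, and ζ(s) − Σ_{d non-square, d ∉ T⁰} d^{−s} remains bounded as s → 1⁺. -/
/-!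
Every `d ∈ T⁰` gives a solution of `p² - d y² = e`, `e = ±1`, with `y² < 2p` (as `a > ỹ ≥ y / 2`),
and then `1 / d ≤ 2y² / p²`; the map `d ↦ (e, y, p)` is injective. For fixed `y` and `e`, `p` is
`r + j y²` with `r` a square root of `e` mod `y²` and `p ≥ (j + 1) y² / 2`, so the `p`-sum is
`O(#roots / y²)`. There are at most twice as many square roots of `±1` mod `y²` as of `1` mod `y`,
and each square root `x` of `1` mod `y` is `±1` mod a divisor `D ≥ √y` of `y` (split
`y ∣ (x - 1)(x + 1)` into two factors), so there are at most `4 τ(y) √y` of them. The total is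
therefore dominated by `Σ τ(y) y^(-3/2) = ζ(3/2)²`. The other two claims follow from
`n^(-s) ≤ 1 / n` and the convergence of `Σ 1 / k²` over the squares.
-/

/-- `ỹ = y/2` if `y` is even, `ỹ = y` if `y` is odd. -/
def ytilde (y : ℕ) : ℕ := if Even y then y / 2 else y

/-- `T⁰`: positive non-square integers `d` admitting a Pell-type solution
`|(a y + x)² - d y²| = 1` with `0 ≤ x < y` coprime and `a > ỹ`. -/
def T0 : Set ℕ :=
  {d : ℕ | 0 < d ∧ ¬ IsSquare d ∧ ∃ y x a : ℕ, 1 ≤ y ∧ x < y ∧ Nat.Coprime x y ∧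
    ytilde y < a ∧ |((a * y + x : ℕ) : ℤ) ^ 2 - (d : ℤ) * (y : ℤ) ^ 2| = 1}

/-- `T¹`: positive non-square integers `d ≡ 1 (mod 4)` admitting a Pell-type solution
`|(2(a y + x) - y)² - d y²| = 4` with `0 ≤ x < y` coprime and `a > ỹ`. -/
def T1 : Set ℕ :=
  {d : ℕ | 0 < d ∧ ¬ IsSquare d ∧ d % 4 = 1 ∧ ∃ y x a : ℕ, 1 ≤ y ∧ x < y ∧ Nat.Coprime x y ∧
    ytilde y < a ∧ |(2 * ((a * y + x : ℕ) : ℤ) - (y : ℤ)) ^ 2 - (d : ℤ) * (y : ℤ) ^ 2| = 4}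


open Finset ArithmeticFunction
open scoped ENNReal ArithmeticFunction.zeta ArithmeticFunction.sigma

lemma Int.isCoprime_of_sq_modEq {x m e : ℤ} (he : IsUnit e) (h : x ^ 2 ≡ e [ZMOD m]) :
    IsCoprime x m := by
  obtain ⟨k, hk⟩ := h.dvd
  obtain ⟨u, rfl⟩ := he
  exact ⟨↑u⁻¹ * x, ↑u⁻¹ * k, by linear_combination (↑u⁻¹ : ℤ) * hk.symm + Units.inv_mul u⟩

lemma Nat.div_le_sqrt_of_le_sq {n D : ℕ} (h : n ≤ D ^ 2) : n / D ≤ n.sqrt :=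
  Nat.le_sqrt.2 <| (Nat.mul_le_mul_left _ (Nat.div_le_of_le_mul (by rwa [← sq]))).trans
    (Nat.div_mul_le_self n D)

lemma card_filter_modEq_le (n D : ℕ) (r : ℤ) :
    #{x ∈ range n | ((x : ℕ) : ℤ) ≡ r [ZMOD D]} ≤ n / D + 1 := by
  refine (card_le_card_of_injOn (· / D) (t := range (n / D + 1)) (fun x hx => ?_)
    (fun x hx x' hx' hxx' => ?_)).trans (card_range _).le
  · simp only [coe_filter, mem_range, Set.mem_ofPred_eq, coe_range, Set.mem_Iio] at hx ⊢
    exact Nat.lt_succ_of_le (Nat.div_le_div_right hx.1.le)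
  · simp only [coe_filter, mem_range, Set.mem_ofPred_eq] at hx hx'
    have hmod : x % D = x' % D := Int.natCast_modEq_iff.1 (hx.2.trans hx'.2.symm)
    rw [← Nat.div_add_mod x D, ← Nat.div_add_mod x' D, hmod]
    simp only at hxx'
    rw [hxx']

def sqrtsMod (n : ℕ) (e : ℤ) : Finset ℕ := {x ∈ range n | (x : ℤ) ^ 2 ≡ e [ZMOD n]}

section sqrtsMod

variable {n x : ℕ} {e : ℤ}

lemma mem_sqrtsMod : x ∈ sqrtsMod n e ↔ x < n ∧ (x : ℤ) ^ 2 ≡ e [ZMOD n] := by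
  simp [sqrtsMod]

lemma mod_mem_sqrtsMod (hn : n ≠ 0) (h : (x : ℤ) ^ 2 ≡ e [ZMOD n]) : x % n ∈ sqrtsMod n e :=
  mem_sqrtsMod.2 ⟨Nat.mod_lt _ (Nat.pos_of_ne_zero hn), by
    push_cast [Int.natCast_mod]; exact ((Int.mod_modEq _ _).pow 2).trans h⟩

lemma card_sqrtsMod_neg_one_le : #(sqrtsMod n (-1)) ≤ #(sqrtsMod n 1) := by
  obtain h | ⟨i, hi⟩ := (sqrtsMod n (-1)).eq_empty_or_nonempty
  · simp [h]
  obtain ⟨hin, hi2⟩ := mem_sqrtsMod.1 hi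
  have hn : n ≠ 0 := by omega
  have hcop : Nat.Coprime i n :=
    Nat.isCoprime_iff_coprime.1 (Int.isCoprime_of_sq_modEq isUnit_one.neg hi2)
  refine card_le_card_of_injOn (fun x => x * i % n) (fun x hx => ?_) (fun x hx x' hx' hxx' => ?_)
  · have hx2 := (mem_sqrtsMod.1 hx).2
    exact mod_mem_sqrtsMod hn (by push_cast; simpa [mul_pow] using hx2.mul hi2)
  · have hxx : x ≡ x' [MOD n] := Nat.ModEq.cancel_right_of_coprime (by rwa [Nat.gcd_comm]) hxx'
    exact hxx.eq_of_lt_of_lt (mem_sqrtsMod.1 hx).1 (mem_sqrtsMod.1 hx').1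

lemma card_sqrtsMod_sq_le (he : IsUnit e) : #(sqrtsMod (n ^ 2) e) ≤ 2 * #(sqrtsMod n e) := by
  rcases eq_or_ne n 0 with rfl | hn
  · simp [sqrtsMod]
  have hn2 : (n : ℤ) ∣ (n ^ 2 : ℕ) := by push_cast; exact Dvd.intro _ (sq _).symm
  -- the lifts of a root `w` mod `n` are `w + n t`, and two of them with `t` in the same half of
  -- `[0, n)` coincide
  let lift : ℕ → ℕ × Bool := fun z => (z % n, decide (2 * (z / n) < n))
  refine (card_le_card_of_injOn lift (t := sqrtsMod n e ×ˢ univ) (fun z hz => ?_)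
    (fun z hz z' hz' hzz' => ?_)).trans (by simp [mul_comm])
  · exact mem_product.2 ⟨mod_mem_sqrtsMod hn ((mem_sqrtsMod.1 hz).2.of_dvd hn2), mem_univ _⟩
  obtain ⟨hzn, hz2⟩ := mem_sqrtsMod.1 hz
  obtain ⟨hzn', hz2'⟩ := mem_sqrtsMod.1 hz'
  simp only [lift, Prod.mk.injEq, decide_eq_decide] at hzz'
  obtain ⟨hw, hhalf⟩ := hzz'
  set w := z % n
  set t := z / n
  set t' := z' / n
  have ht : t < n := Nat.div_lt_of_lt_mul (by rwa [← sq])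
  have ht' : t' < n := Nat.div_lt_of_lt_mul (by rwa [← sq])
  have hz : (z : ℤ) = n * t + w := by exact_mod_cast (Nat.div_add_mod z n).symm
  have hz' : (z' : ℤ) = n * t' + w := by rw [hw]; exact_mod_cast (Nat.div_add_mod z' n).symm
  have hcop : IsCoprime (n : ℤ) w := by
    have hwz : (w : ℤ) ≡ z [ZMOD n] := by simpa [w, Int.natCast_mod] using Int.mod_modEq (z : ℤ) n
    exact (Int.isCoprime_of_sq_modEq he ((hwz.pow 2).trans (hz2.of_dvd hn2))).symm
  have hdvd : (n : ℤ) * n ∣ n * ((t - t') * (n * (t + t') + 2 * w)) := by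
    have := (hz2'.trans hz2.symm).dvd
    push_cast at this
    rwa [sq, show (z : ℤ) ^ 2 - z' ^ 2 = n * ((t - t') * (n * (t + t') + 2 * w)) by
      rw [hz, hz']; ring] at this
  have h2 : (n : ℤ) ∣ 2 * (t - t') := by
    have := (mul_dvd_mul_iff_left (by exact_mod_cast hn)).1 hdvd
    refine hcop.dvd_of_dvd_mul_left ((dvd_sub this (Dvd.intro ((t - t') * (t + t')) rfl)).trans ?_)
    exact ⟨1, by ring⟩
  have : (2 * (t - t') : ℤ) = 0 := Int.eq_zero_of_abs_lt_dvd h2 (by rw [abs_lt]; omega)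
  rw [← Nat.div_add_mod z n, ← Nat.div_add_mod z' n, ← hw]
  congr 2
  omega

lemma card_sqrtsMod_sq_unit_le (u : ℤˣ) : #(sqrtsMod (n ^ 2) u) ≤ 2 * #(sqrtsMod n 1) := by
  refine (card_sqrtsMod_sq_le u.isUnit).trans (Nat.mul_le_mul_left 2 ?_)
  rcases Int.units_eq_one_or u with rfl | rfl
  · rfl
  · exact card_sqrtsMod_neg_one_le

lemma exists_dvd_sq_le_of_sq_modEq_one (hn : n ≠ 0) (h : (x : ℤ) ^ 2 ≡ 1 [ZMOD n]) :
    ∃ D ∈ n.divisors, n ≤ D ^ 2 ∧ ((x : ℤ) ≡ 1 [ZMOD D] ∨ (x : ℤ) ≡ -1 [ZMOD D]) := by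
  have hdvd : (n : ℤ) ∣ (x - 1) * (x + 1) := by
    have := h.symm.dvd
    rwa [show (x : ℤ) ^ 2 - 1 = (x - 1) * (x + 1) by ring] at this
  obtain ⟨a, b, ha, hb, hab⟩ := exists_dvd_and_dvd_of_dvd_mul hdvd
  have hn' : n = a.natAbs * b.natAbs := by simpa [Int.natAbs_mul] using congrArg Int.natAbs hab
  rcases le_total a.natAbs b.natAbs with hle | hle
  · refine ⟨b.natAbs, Nat.mem_divisors.2 ⟨Dvd.intro_left _ hn'.symm, hn⟩,
      by rw [hn', sq]; exact Nat.mul_le_mul_right _ hle, Or.inr ?_⟩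
    exact (Int.modEq_iff_dvd.2 (by simpa using Int.natAbs_dvd.2 hb)).symm
  · refine ⟨a.natAbs, Nat.mem_divisors.2 ⟨Dvd.intro _ hn'.symm, hn⟩,
      by rw [hn', sq]; exact Nat.mul_le_mul_left _ hle, Or.inl ?_⟩
    exact (Int.modEq_iff_dvd.2 (Int.natAbs_dvd.2 ha)).symm

lemma card_sqrtsMod_one_le : #(sqrtsMod n 1) ≤ #n.divisors * (2 * (n.sqrt + 1)) := by
  rcases eq_or_ne n 0 with rfl | hn
  · simp [sqrtsMod]
  have hsub : sqrtsMod n 1 ⊆ {D ∈ n.divisors | n ≤ D ^ 2}.biUnion fun D =>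
      {x ∈ range n | ((x : ℕ) : ℤ) ≡ 1 [ZMOD D]} ∪
        {x ∈ range n | ((x : ℕ) : ℤ) ≡ -1 [ZMOD D]} := by
    intro x hx
    obtain ⟨hxn, hx2⟩ := mem_sqrtsMod.1 hx
    obtain ⟨D, hD, hDn, hxD⟩ := exists_dvd_sq_le_of_sq_modEq_one hn hx2
    simp only [mem_biUnion, mem_filter, mem_union, mem_range]
    exact ⟨D, ⟨hD, hDn⟩, by tauto⟩
  refine (card_le_card hsub).trans <| card_biUnion_le.trans <|
    (sum_le_card_nsmul _ _ _ fun D hD => ?_).trans (Nat.mul_le_mul_right _ (card_filter_le _ _))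
  have hsqrt := Nat.div_le_sqrt_of_le_sq (mem_filter.1 hD).2
  have h₁ := card_filter_modEq_le n D 1
  have h₂ := card_filter_modEq_le n D (-1)
  exact (card_union_le _ _).trans (by omega)

end sqrtsMod

lemma summable_card_divisors_div_rpow :
    Summable fun n : ℕ => (#n.divisors : ℝ) / (n : ℝ) ^ (3 / 2 : ℝ) := by
  have hζ : LSeriesSummable (fun n => ((ζ n : ℕ) : ℂ)) (3 / 2) :=
    LSeriesSummable_zeta_iff.2 (by norm_num)
  have hσ : (ζ * ζ : ArithmeticFunction ℕ) = σ 0 := by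
    rw [← zeta_mul_pow_eq_sigma, pow_zero_eq_zeta]
  refine (LSeriesSummable_mul (f := ζ) (g := ζ) hζ hζ).norm.congr fun n => ?_
  rcases eq_or_ne n 0 with rfl | hn
  · simp
  rw [LSeries.norm_term_eq, if_neg hn, ← natCoe_mul, hσ]
  simp [sigma_zero_apply]

lemma summable_card_sqrtsMod_one_div_sq :
    Summable fun n : ℕ => (#(sqrtsMod n 1) : ℝ) / n ^ 2 := by
  refine Summable.of_nonneg_of_le (fun n => by positivity) (fun n => ?_)
    (summable_card_divisors_div_rpow.mul_left 4)
  rcases eq_or_ne n 0 with rfl | hn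
  · simp
  have hn1 : (1 : ℝ) ≤ n := by exact_mod_cast Nat.one_le_iff_ne_zero.2 hn
  have hsqrt : (n.sqrt : ℝ) + 1 ≤ 2 * √n := by
    have := Real.nat_sqrt_le_real_sqrt (a := n)
    have := Real.one_le_sqrt.2 hn1
    linarith
  have hcard : (#(sqrtsMod n 1) : ℝ) ≤ #n.divisors * (4 * √n) := by
    have := card_sqrtsMod_one_le (n := n)
    calc (#(sqrtsMod n 1) : ℝ) ≤ #n.divisors * (2 * (n.sqrt + 1)) := by exact_mod_cast this
      _ ≤ #n.divisors * (4 * √n) := mul_le_mul_of_nonneg_left (by linarith) (by positivity)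
  have hpow : (n : ℝ) ^ (3 / 2 : ℝ) * √n = n ^ 2 := by
    rw [Real.sqrt_eq_rpow, ← Real.rpow_add (by positivity)]
    norm_num
  rw [← hpow, mul_div_assoc', div_le_div_iff₀ (by positivity) (by positivity)]
  calc (#(sqrtsMod n 1) : ℝ) * n ^ (3 / 2 : ℝ) ≤ #n.divisors * (4 * √n) * n ^ (3 / 2 : ℝ) := by
        gcongr
    _ = _ := by ring

lemma le_two_mul_ytilde (y : ℕ) : y ≤ 2 * ytilde y := by
  unfold ytilde
  split_ifs with h
  · obtain ⟨k, rfl⟩ := h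
    omega
  · omega

lemma exists_pell_of_mem_T0 {d : ℕ} (hd : d ∈ T0) :
    ∃ (e : ℤˣ) (y p : ℕ), 0 < y ∧ y ^ 2 < 2 * p ∧ (p : ℤ) ^ 2 - d * y ^ 2 = e := by
  obtain ⟨-, -, y, x, a, hy, -, -, ha, h⟩ := hd
  have hp : y ^ 2 < 2 * (a * y + x) := by nlinarith [le_two_mul_ytilde y]
  obtain ⟨e, he⟩ := Int.isUnit_iff_abs_eq.2 h
  exact ⟨e, y, a * y + x, hy, hp, he.symm⟩

noncomputable def pellWeight (e : ℤˣ) (y p : ℕ) : ℝ≥0∞ :=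
  if y ^ 2 < 2 * p ∧ (p : ℤ) ^ 2 ≡ e [ZMOD (y ^ 2 : ℕ)] then ENNReal.ofReal (2 * y ^ 2 / p ^ 2)
  else 0

lemma tsum_T0_le_tsum_pellWeight :
    ∑' d : T0, ENNReal.ofReal (1 / (d : ℕ)) ≤ ∑' w : ℤˣ × ℕ × ℕ, pellWeight w.1 w.2.1 w.2.2 := by
  choose e y p hy hp hpell using fun d : T0 => exists_pell_of_mem_T0 d.2
  have hinj : Function.Injective fun d => (e d, y d, p d) := by
    intro d d' h
    simp only [Prod.mk.injEq] at h
    obtain ⟨he, hy', hp'⟩ := h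
    have h₁ := hpell d
    have h₂ := hpell d'
    rw [he, hy', hp'] at h₁
    have hy0 : ((y d' : ℤ)) ^ 2 ≠ 0 := by have := hy d'; positivity
    exact Subtype.ext (by exact_mod_cast mul_right_cancel₀ hy0 (by linarith : (d : ℤ) * _ = d' * _))
  refine (ENNReal.tsum_le_tsum fun d => ?_).trans
    (ENNReal.tsum_comp_le_tsum_of_injective hinj fun w => pellWeight w.1 w.2.1 w.2.2)
  have hd : 0 < (d : ℕ) := d.2.1
  have hmod : (p d : ℤ) ^ 2 ≡ e d [ZMOD (y d ^ 2 : ℕ)] :=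
    Int.modEq_iff_dvd.2 ⟨-d, by push_cast; linarith [hpell d]⟩
  rw [pellWeight, if_pos ⟨hp d, hmod⟩]
  refine ENNReal.ofReal_le_ofReal ?_
  have hp2 : (p d : ℤ) ^ 2 ≤ 2 * y d ^ 2 * d := by
    have : ((e d : ℤˣ) : ℤ) ≤ 1 := by rcases Int.units_eq_one_or (e d) with h | h <;> simp [h]
    have : (1 : ℤ) ≤ d * y d ^ 2 := one_le_mul_of_one_le_of_one_le (by exact_mod_cast hd)
      (one_le_pow₀ (by exact_mod_cast hy d))
    linarith [hpell d]
  have hp0 : 0 < p d := by nlinarith [hp d]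
  rw [div_le_div_iff₀ (by positivity) (by positivity)]
  exact_mod_cast (by linarith : (1 : ℤ) * p d ^ 2 ≤ 2 * y d ^ 2 * d)

lemma tsum_pellWeight_le (e : ℤˣ) (y : ℕ) :
    ∑' p, pellWeight e y p ≤
      ENNReal.ofReal (8 * (∑' j : ℕ, 1 / ((j : ℝ) + 1) ^ 2) * #(sqrtsMod (y ^ 2) e) / y ^ 2) := by
  rcases eq_or_ne y 0 with rfl | hy
  · simp [pellWeight]
  set S := sqrtsMod (y ^ 2) e
  have hc : Summable fun j : ℕ => 1 / ((j : ℝ) + 1) ^ 2 := by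
    simpa using (summable_nat_add_iff 1).2 (Real.summable_one_div_nat_pow.2 one_lt_two)
  -- `p = r + j y²` with `r ∈ S`; since `y² < 2p`, we have `p ≥ (j + 1) y² / 2`
  let W (r j : ℕ) : ℝ≥0∞ :=
    if r ∈ S then ENNReal.ofReal (8 / y ^ 2 * (1 / ((j : ℝ) + 1) ^ 2)) else 0
  have hinj : Function.Injective fun p => (p % y ^ 2, p / y ^ 2) := by
    intro p p' h
    simp only [Prod.mk.injEq] at h
    rw [← Nat.div_add_mod p (y ^ 2), ← Nat.div_add_mod p' (y ^ 2), h.1, h.2]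
  have hle : ∀ p, pellWeight e y p ≤ W (p % y ^ 2) (p / y ^ 2) := by
    intro p
    unfold pellWeight
    split_ifs with h
    swap; · exact zero_le
    rw [show W _ _ = _ from if_pos (mod_mem_sqrtsMod (by positivity) h.2)]
    refine ENNReal.ofReal_le_ofReal ?_
    have hj : (p / y ^ 2 + 1) * y ^ 2 ≤ 2 * p := by
      have := Nat.div_mul_le_self p (y ^ 2)
      rcases Nat.eq_zero_or_pos (p / y ^ 2) with h0 | h0
      · rw [h0]; omega
      · nlinarith
    have hj' : ((p / y ^ 2 : ℕ) + 1 : ℝ) * y ^ 2 ≤ 2 * p := by exact_mod_cast hj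
    have hp : (0 : ℝ) < p := by exact_mod_cast (by omega : 0 < p)
    rw [div_mul_div_comm, div_le_div_iff₀ (by positivity) (by positivity)]
    nlinarith [mul_le_mul hj' hj' (by positivity) (by positivity)]
  calc ∑' p, pellWeight e y p ≤ ∑' q : ℕ × ℕ, W q.1 q.2 :=
        (ENNReal.tsum_le_tsum hle).trans
          (ENNReal.tsum_comp_le_tsum_of_injective hinj fun q => W q.1 q.2)
    _ = ∑ r ∈ S, ∑' j : ℕ, ENNReal.ofReal (8 / y ^ 2 * (1 / ((j : ℝ) + 1) ^ 2)) := by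
      rw [ENNReal.tsum_prod, tsum_eq_sum (s := S) fun r hr => by simp [W, hr]]
      exact sum_congr rfl fun r hr => by simp [W, hr]
    _ = _ := by
      rw [← ENNReal.ofReal_tsum_of_nonneg (fun j => by positivity) (hc.mul_left _), sum_const,
        nsmul_eq_mul, ← ENNReal.ofReal_natCast, ← ENNReal.ofReal_mul (by positivity), tsum_mul_left]
      ring_nf

lemma tsum_T0_ne_top : ∑' d : T0, ENNReal.ofReal (1 / (d : ℕ)) ≠ ∞ := by
  set c := ∑' j : ℕ, 1 / ((j : ℝ) + 1) ^ 2
  have hsum : Summable fun y : ℕ => 8 * c * (2 * #(sqrtsMod y 1)) / (y : ℝ) ^ 2 :=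
    (summable_card_sqrtsMod_one_div_sq.mul_left (16 * c)).congr fun y => by ring
  refine ne_top_of_le_ne_top
    (ENNReal.mul_ne_top (by norm_num : (2 : ℝ≥0∞) ≠ ∞) hsum.tsum_ofReal_ne_top) ?_
  calc ∑' d : T0, ENNReal.ofReal (1 / (d : ℕ))
      ≤ ∑' w : ℤˣ × ℕ × ℕ, pellWeight w.1 w.2.1 w.2.2 := tsum_T0_le_tsum_pellWeight
    _ = ∑' (e : ℤˣ) (y : ℕ) (p : ℕ), pellWeight e y p := by
      rw [ENNReal.tsum_prod (f := fun e (q : ℕ × ℕ) => pellWeight e q.1 q.2)]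
      exact tsum_congr fun e => ENNReal.tsum_prod
    _ ≤ ∑' (_ : ℤˣ) (y : ℕ), ENNReal.ofReal (8 * c * (2 * #(sqrtsMod y 1)) / (y : ℝ) ^ 2) := by
      refine ENNReal.tsum_le_tsum fun e => ENNReal.tsum_le_tsum fun y =>
        (tsum_pellWeight_le e y).trans (ENNReal.ofReal_le_ofReal ?_)
      have hc : 0 ≤ c := tsum_nonneg fun j => by positivity
      gcongr
      exact_mod_cast card_sqrtsMod_sq_unit_le e
    _ = 2 * ∑' y : ℕ, ENNReal.ofReal (8 * c * (2 * #(sqrtsMod y 1)) / (y : ℝ) ^ 2) := by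
      simp [tsum_fintype]

lemma summable_of_tsum_ofReal_ne_top {α : Type*} {f : α → ℝ} (hf : ∀ a, 0 ≤ f a)
    (h : ∑' a, ENNReal.ofReal (f a) ≠ ∞) : Summable f :=
  (ENNReal.summable_toReal h).congr fun a => ENNReal.toReal_ofReal (hf a)

lemma Real.natCast_rpow_neg_le_one_div (n : ℕ) {s : ℝ} (hs : 1 ≤ s) : (n : ℝ) ^ (-s) ≤ 1 / n := by
  rcases eq_or_ne n 0 with rfl | hn
  · simp [Real.zero_rpow (by linarith : -s ≠ 0)]
  rw [one_div, ← Real.rpow_neg_one]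
  exact Real.rpow_le_rpow_of_exponent_le (by exact_mod_cast Nat.one_le_iff_ne_zero.2 hn)
    (by linarith)

lemma tsum_rpow_neg_le_tsum_one_div {S : Set ℕ} (hS : Summable fun n : S => 1 / (n : ℝ))
    {s : ℝ} (hs : 1 ≤ s) : ∑' n : S, (n : ℝ) ^ (-s) ≤ ∑' n : S, 1 / (n : ℝ) :=
  have h := fun n : S => Real.natCast_rpow_neg_le_one_div n hs
  (hS.of_nonneg_of_le (fun _ => by positivity) h).tsum_le_tsum h hS

lemma abs_tsum_rpow_neg_sub_tsum_le {A : Set ℕ} (hA : Summable fun n : (Aᶜ : Set ℕ) => 1 / (n : ℝ))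
    {s : ℝ} (hs : 1 < s) :
    |∑' n : ℕ, (n : ℝ) ^ (-s) - ∑' n : A, (n : ℝ) ^ (-s)| ≤ ∑' n : (Aᶜ : Set ℕ), 1 / (n : ℝ) := by
  have hζ : Summable fun n : ℕ => (n : ℝ) ^ (-s) := Real.summable_nat_rpow.2 (by linarith)
  rw [← (hζ.subtype A).tsum_add_tsum_compl (hζ.subtype Aᶜ), add_sub_cancel_left,
    abs_of_nonneg (tsum_nonneg fun _ => by positivity)]
  exact tsum_rpow_neg_le_tsum_one_div hA hs.le

lemma tsum_isSquare_ne_top : ∑' n : {n : ℕ | IsSquare n}, ENNReal.ofReal (1 / (n : ℕ)) ≠ ∞ := by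
  have hsq : {n : ℕ | IsSquare n} = Set.range fun k : ℕ => k ^ 2 := by
    ext n
    simp [isSquare_iff_exists_sq, eq_comm]
  rw [hsq, tsum_range (fun n : ℕ => ENNReal.ofReal (1 / n)) (Nat.pow_left_injective two_ne_zero)]
  simpa using (Real.summable_one_div_nat_pow.2 one_lt_two).tsum_ofReal_ne_top

lemma summable_one_div_T0 : Summable fun d : T0 => 1 / ((d : ℕ) : ℝ) :=
  summable_of_tsum_ofReal_ne_top (fun _ => by positivity) tsum_T0_ne_top

lemma summable_one_div_compl_nonsquare_not_T0 :
    Summable fun n : ({d : ℕ | 0 < d ∧ ¬ IsSquare d ∧ d ∉ T0}ᶜ : Set ℕ) => 1 / (n : ℝ) := by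
  have hsub : {d : ℕ | 0 < d ∧ ¬ IsSquare d ∧ d ∉ T0}ᶜ ⊆ {n | IsSquare n} ∪ T0 := fun n hn => by
    by_contra h
    simp only [Set.mem_union, Set.mem_ofPred_eq, not_or] at h
    exact hn ⟨Nat.pos_of_ne_zero fun h0 => h.1 (h0 ▸ IsSquare.zero), h⟩
  refine summable_of_tsum_ofReal_ne_top (fun _ => by positivity) (ne_top_of_le_ne_top
    (ENNReal.add_ne_top.2 ⟨tsum_isSquare_ne_top, tsum_T0_ne_top⟩) ?_)
  exact (ENNReal.tsum_mono_subtype (fun n : ℕ => ENNReal.ofReal (1 / n)) hsub).trans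
    (ENNReal.tsum_union_le (fun n : ℕ => ENNReal.ofReal (1 / n)) _ _)

/-- there is a constant `C` bounding `Σ_{d ∈ T⁰} d^{-s}` for all real `s > 1`;
in particular `Σ_{d ∈ T⁰} 1/d` converges, and
`ζ(s) - Σ_{d non-square, d ∉ T⁰} d^{-s}` remains bounded as `s → 1⁺`. -/
theorem stmt_17 :
    (∃ C : ℝ, ∀ s : ℝ, 1 < s → ∑' d : T0, ((d : ℕ) : ℝ) ^ (-s) ≤ C) ∧
    Summable (fun d : T0 => 1 / ((d : ℕ) : ℝ)) ∧
    (∃ C : ℝ, ∀ s : ℝ, 1 < s →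
      |(∑' n : ℕ, (n : ℝ) ^ (-s)) -
        ∑' d : {d : ℕ | 0 < d ∧ ¬ IsSquare d ∧ d ∉ T0}, ((d : ℕ) : ℝ) ^ (-s)| ≤ C) :=
  ⟨⟨_, fun _ hs => tsum_rpow_neg_le_tsum_one_div summable_one_div_T0 hs.le⟩, summable_one_div_T0,
    ⟨_, fun _ => abs_tsum_rpow_neg_sub_tsum_le summable_one_div_compl_nonsquare_not_T0⟩⟩
end

section
/- For a positive integer y set ỹ = y/2 if y is even and ỹ = y if y is odd. Let T⁰ be the set of positive non-square integers d for which there exist integers y ≥ 1, x with 0 ≤ x < y and gcd(x, y) = 1, and a > ỹ with |(a·y + x)² − d·y²| = 1; let T¹ be the set of positive non-square integers d ≡ 1 (mod 4) for which there exist such y, x and a > ỹ with |(2(a·y + x) − y)² − d·y²| = 4. Then lim_{X→∞} #{d ≤ X : d squarefree, d ∈ T⁰} / #{d ≤ X : d squarefree} = 0, and lim_{X→∞} #{d ≤ X : d squarefree, d ≡ 1 (mod 4), d ∈ T¹} / #{d ≤ X : d squarefree, d ≡ 1 (mod 4)} = 0. In particular, almost all squarefree d > 1 (in relative density among squarefree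 integers) are the least element of their attached quadratic progression, i.e. almost all real quadratic fields ℚ(√d) are of the least type. -/
open Finset Real Filter Topology Asymptotics

theorem card_le_div_add_one_of_modEq {s : Finset ℕ} {L B : ℕ} (hB : ∀ t ∈ s, t ≤ B)
    (hL : ∀ a ∈ s, ∀ b ∈ s, a ≡ b [MOD L]) : #s ≤ B / L + 1 := by
  calc #s ≤ #(range (B / L + 1)) := by
        refine card_le_card_of_injOn (· / L) (fun t ht => ?_) fun a ha b hb hab => ?_
        · simpa [Nat.lt_succ_iff] using Nat.div_le_div_right (c := L) (hB t ht)
        · rw [← Nat.div_add_mod a L, ← Nat.div_add_mod b L, show a / L = b / L from hab,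
            show a % L = b % L from hL a ha b hb]
    _ = B / L + 1 := card_range _

theorem Int.gcd_dvd_natCast_right (u : ℤ) (m : ℕ) : Int.gcd u m ∣ m := by
  simpa using Int.gcd_dvd_natAbs_right u m

theorem Int.div_gcd_dvd_of_dvd_mul {m : ℕ} (hm : 0 < m) {u v : ℤ} (h : (m : ℤ) ∣ u * v) :
    ((m / Int.gcd u m : ℕ) : ℤ) ∣ v := by
  set g := Int.gcd u m
  have hg : (g : ℤ) ≠ 0 := by exact_mod_cast (Int.gcd_pos_of_ne_zero_right u (by omega)).ne'
  have h' : (m : ℤ) ∣ g * v := by rwa [← dvd_gcd_mul_iff_dvd_mul, Int.gcd_comm] at h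
  rw [← Nat.mul_div_cancel' (Int.gcd_dvd_natCast_right u m), Nat.cast_mul] at h'
  exact (mul_dvd_mul_iff_left hg).1 h'

theorem natCast_gcd_dvd_two_mul_of_dvd_sub_of_dvd_add {g q : ℕ} {a t₀ ε : ℤ}
    (hg : (g : ℤ) ∣ a - t₀) (hq : (q : ℤ) ∣ a + t₀) (h : ((g * q : ℕ) : ℤ) ∣ t₀ ^ 2 - ε) :
    (Nat.gcd g q : ℤ) ∣ 2 * ε := by
  have hcg : (Nat.gcd g q : ℤ) ∣ g := Int.natCast_dvd_natCast.2 (Nat.gcd_dvd_left g q)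
  have hcq : (Nat.gcd g q : ℤ) ∣ q := Int.natCast_dvd_natCast.2 (Nat.gcd_dvd_right g q)
  have h2t : (Nat.gcd g q : ℤ) ∣ 2 * t₀ :=
    (dvd_sub (hcq.trans hq) (hcg.trans hg)).trans (dvd_of_eq (by ring))
  have hc : (Nat.gcd g q : ℤ) ∣ t₀ ^ 2 - ε :=
    (Int.natCast_dvd_natCast.2 ((Nat.gcd_dvd_left g q).trans (dvd_mul_right g q))).trans h
  exact (dvd_sub (h2t.mul_right t₀) (hc.mul_left 2)).trans (dvd_of_eq (by ring))

-- On the fibre `gcd(t - t₀, m) = g`, `m ∣ (t - t₀)(t + t₀)` gives `t ≡ t₀ (mod g)` and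
-- `t ≡ -t₀ (mod m / g)`, so the fibre is one residue class modulo `lcm(g, m / g) ≥ m / 8`.
theorem card_filter_sq_sub_dvd_gcd_eq_le {m B t₀ : ℕ} (hm : 0 < m) {ε : ℤ} (hε : ε ∣ 4)
    (ht₀ : (m : ℤ) ∣ (t₀ : ℤ) ^ 2 - ε) (g : ℕ) :
    #((Iic B).filter fun t : ℕ => (m : ℤ) ∣ (t : ℤ) ^ 2 - ε ∧ Int.gcd ((t : ℤ) - t₀) m = g) ≤
      8 * B / m + 1 := by
  set F := (Iic B).filter fun t : ℕ => (m : ℤ) ∣ (t : ℤ) ^ 2 - ε ∧ Int.gcd ((t : ℤ) - t₀) m = g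
  obtain hF | ⟨a₀, ha₀⟩ := F.eq_empty_or_nonempty
  · simp [hF]
  set q := m / g
  have hfiber : ∀ t ∈ F, (g : ℤ) ∣ (t : ℤ) - t₀ ∧ (q : ℤ) ∣ (t : ℤ) + t₀ := by
    intro t ht
    obtain ⟨-, hdvd, rfl⟩ := mem_filter.1 ht
    refine ⟨Int.gcd_dvd_left _ _, Int.div_gcd_dvd_of_dvd_mul hm ?_⟩
    exact (dvd_sub hdvd ht₀).trans (dvd_of_eq (by ring))
  have hgq : g * q = m := by
    obtain ⟨-, -, rfl⟩ := mem_filter.1 ha₀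
    exact Nat.mul_div_cancel' (Int.gcd_dvd_natCast_right _ m)
  have hmodEq : ∀ a ∈ F, ∀ b ∈ F, a ≡ b [MOD Nat.lcm g q] := by
    intro a ha b hb
    obtain ⟨hga, hqa⟩ := hfiber a ha
    obtain ⟨hgb, hqb⟩ := hfiber b hb
    have hg : (g : ℤ) ∣ (b : ℤ) - a := (dvd_sub hgb hga).trans (dvd_of_eq (by ring))
    have hq : (q : ℤ) ∣ (b : ℤ) - a := (dvd_sub hqb hqa).trans (dvd_of_eq (by ring))
    rw [Int.natCast_dvd] at hg hq
    rw [Nat.modEq_iff_dvd, Int.natCast_dvd]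
    exact Nat.lcm_dvd hg hq
  have hgcd : Nat.gcd g q ∣ 8 := by
    obtain ⟨hga, hqa⟩ := hfiber a₀ ha₀
    have := natCast_gcd_dvd_two_mul_of_dvd_sub_of_dvd_add hga hqa (by rwa [hgq])
    exact_mod_cast this.trans (mul_dvd_mul_left 2 hε)
  have hmL : m ≤ 8 * Nat.lcm g q := by
    rw [← hgq, ← Nat.gcd_mul_lcm]
    exact Nat.mul_le_mul_right _ (Nat.le_of_dvd (by norm_num) hgcd)
  calc #F ≤ B / Nat.lcm g q + 1 :=
        card_le_div_add_one_of_modEq (fun t ht => mem_Iic.1 (mem_filter.1 ht).1) hmodEq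
    _ ≤ 8 * B / m + 1 := by
        rw [← Nat.mul_div_mul_left B _ (by norm_num : 0 < 8)]
        gcongr

theorem card_filter_sq_sub_dvd_le {m : ℕ} (hm : 0 < m) {ε : ℤ} (hε : ε ∣ 4) (B : ℕ) :
    #((Iic B).filter fun t : ℕ => (m : ℤ) ∣ (t : ℤ) ^ 2 - ε) ≤ #m.divisors * (8 * B / m + 1) := by
  set s := (Iic B).filter fun t : ℕ => (m : ℤ) ∣ (t : ℤ) ^ 2 - ε
  obtain hs | ⟨t₀, ht₀⟩ := s.eq_empty_or_nonempty
  · simp [hs]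
  have hmaps : ∀ t ∈ s, Int.gcd ((t : ℤ) - t₀) m ∈ m.divisors := fun t _ =>
    Nat.mem_divisors.2 ⟨Int.gcd_dvd_natCast_right _ m, hm.ne'⟩
  rw [card_eq_sum_card_fiberwise hmaps, ← smul_eq_mul, ← sum_const]
  refine sum_le_sum fun g _ => ?_
  rw [filter_filter]
  exact card_filter_sq_sub_dvd_gcd_eq_le hm hε (mem_filter.1 ht₀).2 g

theorem Nat.card_divisors_le_two_mul_sqrt (n : ℕ) : #n.divisors ≤ 2 * n.sqrt := by
  set A := n.divisors.filter fun d => d * d ≤ n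
  have hA : #A ≤ n.sqrt := by
    calc #A ≤ #(Icc 1 n.sqrt) := card_le_card fun d hd => by
          obtain ⟨hd, hdd⟩ := mem_filter.1 hd
          exact mem_Icc.2 ⟨Nat.pos_of_mem_divisors hd, Nat.le_sqrt.2 hdd⟩
      _ = n.sqrt := by simp
  have hcover : n.divisors ⊆ A ∪ A.image (n / ·) := by
    intro d hd
    obtain ⟨hdn, hn⟩ := Nat.mem_divisors.1 hd
    by_cases h : d * d ≤ n
    · exact mem_union_left _ (mem_filter.2 ⟨hd, h⟩)
    · refine mem_union_right _ (mem_image.2 ⟨n / d, mem_filter.2 ⟨?_, ?_⟩, Nat.div_div_self hdn hn⟩)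
      · exact Nat.mem_divisors.2 ⟨Nat.div_dvd_of_dvd hdn, hn⟩
      · have hq : n / d * d = n := Nat.div_mul_cancel hdn
        have : n / d ≤ d := by nlinarith
        nlinarith
  calc #n.divisors ≤ #A + #(A.image (n / ·)) := (card_le_card hcover).trans (card_union_le _ _)
    _ ≤ #A + #A := Nat.add_le_add_left Finset.card_image_le _
    _ ≤ 2 * n.sqrt := by omega

theorem Nat.card_divisors_sq_le (n : ℕ) : #(n ^ 2).divisors ≤ #n.divisors ^ 2 := by
  rw [sq, sq, Nat.divisors_mul]
  exact card_mul_le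

theorem Nat.card_divisors_sq_le_two_mul_sqrt_mul (n : ℕ) :
    (#(n ^ 2).divisors : ℝ) ≤ 2 * √n * #n.divisors :=
  calc (#(n ^ 2).divisors : ℝ) ≤ #n.divisors * #n.divisors := by
        exact_mod_cast (Nat.card_divisors_sq_le n).trans_eq (sq _)
    _ ≤ (2 * n.sqrt : ℕ) * #n.divisors := by
        gcongr; exact_mod_cast Nat.card_divisors_le_two_mul_sqrt n
    _ ≤ 2 * √n * #n.divisors := by push_cast; gcongr; exact Real.nat_sqrt_le_real_sqrt

theorem sum_card_divisors_div_le (N : ℕ) :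
    ∑ n ∈ Ioc 0 N, (#n.divisors : ℝ) / n ≤ (1 + log N) ^ 2 := by
  let f : ArithmeticFunction ℝ := ⟨fun n => (n : ℝ)⁻¹, by simp⟩
  have hf : ∀ n, f n = (n : ℝ)⁻¹ := fun _ => rfl
  have hf0 : ∀ n, 0 ≤ f n := fun n => inv_nonneg.2 (Nat.cast_nonneg n)
  have hff : ∀ n, (f * f) n = (#n.divisors : ℝ) / n := by
    intro n
    rw [ArithmeticFunction.mul_apply, ← Nat.map_div_right_divisors, sum_map, div_eq_mul_inv,
      ← nsmul_eq_mul, ← sum_const]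
    refine sum_congr rfl fun d hd => ?_
    obtain ⟨hdn, hn⟩ := Nat.mem_divisors.1 hd
    have hd0 : (d : ℝ) ≠ 0 := by exact_mod_cast (Nat.pos_of_mem_divisors hd).ne'
    change f d * f (n / d) = _
    rw [hf, hf, Nat.cast_div hdn hd0]
    field_simp
  have hH : ∑ n ∈ Ioc 0 N, f n ≤ 1 + log N := by
    have := harmonic_le_one_add_log N
    rw [harmonic_eq_sum_Icc] at this
    push_cast at this
    rw [← Icc_add_one_left_eq_Ioc, zero_add]
    simpa [hf] using this
  calc ∑ n ∈ Ioc 0 N, (#n.divisors : ℝ) / n = ∑ n ∈ Ioc 0 N, (f * f) n := by simp only [hff]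
    _ = ∑ n ∈ Ioc 0 N, f n * ∑ m ∈ Ioc 0 (N / n), f m :=
        ArithmeticFunction.sum_Ioc_mul_eq_sum_sum f f N
    _ ≤ ∑ n ∈ Ioc 0 N, f n * ∑ m ∈ Ioc 0 N, f m := by
        gcongr with n
        · exact hf0 n
        · exact fun m _ _ => hf0 m
        · exact Nat.div_le_self N n
    _ = (∑ n ∈ Ioc 0 N, f n) ^ 2 := by rw [← sum_mul, sq]
    _ ≤ (1 + log N) ^ 2 := by
        gcongr
        exact sum_nonneg fun n _ => hf0 n

def pellCandidates (Q : ℕ) : Finset ℕ :=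
  ({1, -1, 4, -4} : Finset ℤ).biUnion fun ε => (Ioc 0 (2 * Q + 4)).biUnion fun y =>
    ((Iic (y * (Q + 3))).filter fun t : ℕ => ((y ^ 2 : ℕ) : ℤ) ∣ (t : ℤ) ^ 2 - ε).image
      fun t : ℕ => ((t : ℤ) ^ 2 - ε).toNat / y ^ 2

theorem mem_pellCandidates {X d y t : ℕ} (hy : 0 < y) (ht : y ^ 2 + 2 * y ≤ 2 * t)
    (hε : |(t : ℤ) ^ 2 - d * y ^ 2| = 1 ∨ |(t : ℤ) ^ 2 - d * y ^ 2| = 4) (hdX : d ≤ X) :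
    d ∈ pellCandidates X.sqrt := by
  set Q := X.sqrt
  set ε := (t : ℤ) ^ 2 - d * y ^ 2
  have hεmem : ε ∈ ({1, -1, 4, -4} : Finset ℤ) := by
    rcases hε with h | h <;> rcases (abs_eq (by norm_num)).1 h with h' | h' <;> simp [h']
  have hX : X ≤ Q ^ 2 + 2 * Q := by
    have := Nat.lt_succ_sqrt' X
    rw [Nat.succ_eq_add_one] at this
    nlinarith
  have htB : t ≤ y * (Q + 3) := by
    have hε4 : ε ≤ 4 := by simp at hεmem; omega
    have : (t : ℤ) ^ 2 ≤ ((y * (Q + 3) : ℕ) : ℤ) ^ 2 := by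
      have : (d : ℤ) * y ^ 2 ≤ ((Q : ℤ) ^ 2 + 2 * Q) * y ^ 2 := by
        gcongr; exact_mod_cast hdX.trans hX
      have : (1 : ℤ) ≤ (y : ℤ) ^ 2 := by exact_mod_cast Nat.one_le_pow _ _ hy
      push_cast; nlinarith
    exact_mod_cast (pow_le_pow_iff_left₀ (by positivity) (by positivity) two_ne_zero).1 this
  have hyQ : y ≤ 2 * Q + 4 := by
    have : y * (y + 2) ≤ y * (2 * Q + 6) := by nlinarith
    have := Nat.le_of_mul_le_mul_left this hy
    omega
  refine mem_biUnion.2 ⟨ε, hεmem, mem_biUnion.2 ⟨y, mem_Ioc.2 ⟨hy, hyQ⟩, mem_image.2 ⟨t, ?_, ?_⟩⟩⟩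
  · exact mem_filter.2 ⟨mem_Iic.2 htB, ⟨d, by push_cast; ring⟩⟩
  · rw [show (t : ℤ) ^ 2 - ε = ((d * y ^ 2 : ℕ) : ℤ) by push_cast; ring, Int.toNat_natCast]
    exact Nat.mul_div_cancel d (by positivity)

theorem card_pellCandidates_le_sum (Q : ℕ) :
    #(pellCandidates Q) ≤
      4 * ∑ y ∈ Ioc 0 (2 * Q + 4), #(y ^ 2).divisors * (8 * (Q + 3) / y + 1) := by
  calc #(pellCandidates Q)
      ≤ #({1, -1, 4, -4} : Finset ℤ) *
          ∑ y ∈ Ioc 0 (2 * Q + 4), #(y ^ 2).divisors * (8 * (Q + 3) / y + 1) :=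
        card_biUnion_le_card_mul _ _ _ fun ε hε => ?_
    _ = _ := by rfl
  refine card_biUnion_le.trans (sum_le_sum fun y hy => card_image_le.trans ?_)
  have hy : 0 < y := (mem_Ioc.1 hy).1
  have hε4 : ε ∣ 4 := by simp at hε; rcases hε with rfl | rfl | rfl | rfl <;> norm_num
  refine (card_filter_sq_sub_dvd_le (by positivity) hε4 _).trans_eq ?_
  rw [show 8 * (y * (Q + 3)) = y * (8 * (Q + 3)) by ring, sq, Nat.mul_div_mul_left _ _ hy]

theorem card_pellCandidates_le (Q : ℕ) :
    (#(pellCandidates Q) : ℝ) ≤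
      80 * √(2 * Q + 4 : ℕ) * (Q + 3) * (1 + log (2 * Q + 4 : ℕ)) ^ 2 := by
  set n := 2 * Q + 4
  have hterm : ∀ y ∈ Ioc 0 n, ((#(y ^ 2).divisors * (8 * (Q + 3) / y + 1) : ℕ) : ℝ) ≤
      20 * √n * (Q + 3) * ((#y.divisors : ℝ) / y) := by
    intro y hy
    obtain ⟨hy0, hyn⟩ := mem_Ioc.1 hy
    have hy0' : (0 : ℝ) < y := by exact_mod_cast hy0
    have hyn' : (y : ℝ) ≤ n := by exact_mod_cast hyn
    have hτ : (#(y ^ 2).divisors : ℝ) ≤ 2 * √n * #y.divisors :=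
      (Nat.card_divisors_sq_le_two_mul_sqrt_mul y).trans (by gcongr)
    have hq : ((8 * (Q + 3) / y + 1 : ℕ) : ℝ) ≤ 10 * (Q + 3) / y := by
      have h1 : ((8 * (Q + 3) / y : ℕ) : ℝ) ≤ 8 * (Q + 3) / y := by
        simpa using Nat.cast_div_le (m := 8 * (Q + 3)) (n := y)
      have h2 : (1 : ℝ) ≤ 2 * (Q + 3) / y := by
        rw [le_div_iff₀ hy0']; simp only [n] at hyn'; push_cast at hyn'; linarith
      push_cast
      calc ((8 * (Q + 3) / y : ℕ) : ℝ) + 1 ≤ 8 * (Q + 3) / y + 2 * (Q + 3) / y :=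
            add_le_add h1 h2
        _ = _ := by ring
    push_cast
    calc _ ≤ 2 * √n * #y.divisors * (10 * (Q + 3) / y) := by
          gcongr
          · exact_mod_cast hq
    _ = _ := by ring
  calc (#(pellCandidates Q) : ℝ)
      ≤ 4 * ∑ y ∈ Ioc 0 n, ((#(y ^ 2).divisors * (8 * (Q + 3) / y + 1) : ℕ) : ℝ) := by
        exact_mod_cast card_pellCandidates_le_sum Q
    _ ≤ 4 * ∑ y ∈ Ioc 0 n, 20 * √n * (Q + 3) * ((#y.divisors : ℝ) / y) := by
        gcongr with y hy; exact hterm y hy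
    _ = 80 * √n * (Q + 3) * ∑ y ∈ Ioc 0 n, (#y.divisors : ℝ) / y := by rw [← mul_sum]; ring
    _ ≤ 80 * √n * (Q + 3) * (1 + log n) ^ 2 := by gcongr; exact sum_card_divisors_div_le n

theorem card_pellCandidates_sqrt_le {X : ℕ} (hX : 1 ≤ X) :
    (#(pellCandidates X.sqrt) : ℝ) ≤ 34560 * (X : ℝ) ^ (3 / 4 : ℝ) * (1 + log X) ^ 2 := by
  set Q := X.sqrt
  set n := 2 * Q + 4
  have hX1 : (1 : ℝ) ≤ X := by exact_mod_cast hX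
  have hs1 : 1 ≤ √(X : ℝ) := Real.one_le_sqrt.2 hX1
  have hQ : (Q : ℝ) ≤ √X := Real.nat_sqrt_le_real_sqrt
  have hn : (n : ℝ) ≤ 6 * √X := by simp only [n]; push_cast; linarith
  have hlogX : 0 ≤ log X := log_nonneg hX1
  have hsqrt : √(X : ℝ) = X ^ (1 / 2 : ℝ) := Real.sqrt_eq_rpow _
  have hsqrtn : √(n : ℝ) ≤ 3 * X ^ (1 / 4 : ℝ) := by
    calc √(n : ℝ) ≤ √(6 * √X) := Real.sqrt_le_sqrt hn
      _ = √6 * X ^ (1 / 4 : ℝ) := by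
          rw [Real.sqrt_mul (by norm_num), hsqrt, Real.sqrt_eq_rpow (_ ^ _),
            ← Real.rpow_mul (by positivity)]
          norm_num
      _ ≤ 3 * X ^ (1 / 4 : ℝ) := by
          gcongr
          rw [Real.sqrt_le_left (by norm_num)]
          norm_num
  have hlog : 1 + log n ≤ 6 * (1 + log X) := by
    have hn0 : (0 : ℝ) < n := by positivity
    have : log n ≤ log 6 + log X := by
      rw [← Real.log_mul (by norm_num) (by positivity)]
      refine Real.log_le_log hn0 (hn.trans ?_)
      nlinarith [Real.mul_self_sqrt (show (0 : ℝ) ≤ X by positivity)]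
    linarith [Real.log_le_sub_one_of_pos (by norm_num : (0 : ℝ) < 6)]
  calc (#(pellCandidates Q) : ℝ) ≤ 80 * √(n : ℝ) * (Q + 3) * (1 + log n) ^ 2 :=
        card_pellCandidates_le Q
    _ ≤ 80 * (3 * X ^ (1 / 4 : ℝ)) * (4 * X ^ (1 / 2 : ℝ)) * (6 * (1 + log X)) ^ 2 := by
        gcongr
        rw [← hsqrt]; linarith
    _ = 34560 * (X : ℝ) ^ (3 / 4 : ℝ) * (1 + log X) ^ 2 := by
        rw [show (3 / 4 : ℝ) = 1 / 4 + 1 / 2 by norm_num, Real.rpow_add (by positivity)]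
        ring

theorem tendsto_one_add_log_sq_div_rpow :
    Tendsto (fun x : ℝ => (1 + log x) ^ 2 / x ^ (1 / 4 : ℝ)) atTop (𝓝 0) := by
  have h : (fun x : ℝ => 1 + log x) =o[atTop] fun x => x ^ (1 / 8 : ℝ) :=
    (isLittleO_const_left.2 <| Or.inr <|
      tendsto_norm_atTop_atTop.comp (tendsto_rpow_atTop (by norm_num))).add
      (isLittleO_log_rpow_atTop (by norm_num))
  refine ((h.pow two_pos).congr' EventuallyEq.rfl ?_).tendsto_div_nhds_zero
  filter_upwards [eventually_ge_atTop 0] with x hx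
  rw [← Real.rpow_natCast, ← Real.rpow_mul hx]
  norm_num

theorem tendsto_div_zero_of_le_rpow_mul_log_sq {num den : ℕ → ℝ} {C c : ℝ} (hc : 0 < c)
    (hnum0 : ∀ X, 0 ≤ num X)
    (hnum : ∀ᶠ X in atTop, num X ≤ C * (X : ℝ) ^ (3 / 4 : ℝ) * (1 + log X) ^ 2)
    (hden : ∀ᶠ X in atTop, c * X ≤ den X) :
    Tendsto (fun X => num X / den X) atTop (𝓝 0) := by
  have hlim := (tendsto_one_add_log_sq_div_rpow.comp tendsto_natCast_atTop_atTop).const_mul (C / c)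
  rw [mul_zero] at hlim
  refine squeeze_zero' ?_ ?_ hlim
  · filter_upwards [hden, eventually_gt_atTop 0] with X hd hX
    exact div_nonneg (hnum0 X) (le_trans (by positivity) hd)
  · filter_upwards [hnum, hden, eventually_gt_atTop 0] with X hn hd hX
    have hX0 : (0 : ℝ) < X := by exact_mod_cast hX
    calc num X / den X ≤ C * (X : ℝ) ^ (3 / 4 : ℝ) * (1 + log X) ^ 2 / (c * X) :=
          div_le_div₀ ((hnum0 X).trans hn) hn (by positivity) hd
      _ = C / c * ((1 + log X) ^ 2 / (X : ℝ) ^ (1 / 4 : ℝ)) := by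
          have : (X : ℝ) ^ (3 / 4 : ℝ) = X / X ^ (1 / 4 : ℝ) := by
            rw [eq_div_iff (by positivity), ← Real.rpow_add hX0]; norm_num
          rw [this]
          field_simp

theorem le_two_mul_of_ytilde_lt {y x a : ℕ} (ha : ytilde y < a) :
    y ^ 2 + 2 * y ≤ 2 * (a * y + x) := by
  have hy : y ≤ 2 * ytilde y := by
    unfold ytilde
    split_ifs with h
    · obtain ⟨k, rfl⟩ := h
      omega
    · omega
  nlinarith

theorem mem_pellCandidates_of_mem_T0 {X d : ℕ} (hd : d ∈ T0) (hdX : d ≤ X) :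
    d ∈ pellCandidates X.sqrt := by
  obtain ⟨-, -, y, x, a, hy, -, -, ha, habs⟩ := hd
  exact mem_pellCandidates hy (le_two_mul_of_ytilde_lt ha) (Or.inl habs) hdX

theorem mem_pellCandidates_of_mem_T1 {X d : ℕ} (hd : d ∈ T1) (hdX : d ≤ X) :
    d ∈ pellCandidates X.sqrt := by
  obtain ⟨-, -, -, y, x, a, hy, -, -, ha, habs⟩ := hd
  have hN := le_two_mul_of_ytilde_lt (x := x) ha
  obtain ⟨t, ht⟩ : ∃ t, 2 * (a * y + x) = t + y := ⟨_, (Nat.sub_add_cancel (by nlinarith)).symm⟩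
  have htZ : (t : ℤ) = 2 * ((a * y + x : ℕ) : ℤ) - y := by
    have := congrArg (Nat.cast (R := ℤ)) ht
    push_cast at this ⊢
    linarith
  exact mem_pellCandidates (t := t) hy (by nlinarith) (Or.inr (by rwa [htZ])) hdX

theorem card_filter_mod_four_eq_one (N : ℕ) :
    #((range (N + 1)).filter (· % 4 = 1)) = (N + 1) / 4 + if 1 < (N + 1) % 4 then 1 else 0 := by
  rw [← Nat.count_eq_card_filter_range]
  convert Nat.count_modEq_card (N + 1) four_pos 1 using 2 <;> rfl

theorem Nat.mod_four_eq_one_of_sq_mul {k e : ℕ} (h : k ^ 2 * e % 4 = 1) : e % 4 = 1 := by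
  obtain ⟨j, rfl | rfl⟩ := Nat.even_or_odd' k
  · rw [show (2 * j) ^ 2 * e = 4 * (j ^ 2 * e) by ring, Nat.mul_mod_right] at h
    exact absurd h zero_ne_one
  · rwa [show (2 * j + 1) ^ 2 * e = e + 4 * ((j ^ 2 + j) * e) by ring,
      Nat.add_mul_mod_self_left] at h

theorem card_filter_mod_four_eq_one_sq_dvd_le (X : ℕ) {k : ℕ} (hk : 0 < k) :
    #((range (X + 1)).filter fun d => d % 4 = 1 ∧ k ^ 2 ∣ d) ≤ X / k ^ 2 / 4 + 1 := by
  calc _ ≤ #((range (X / k ^ 2 + 1)).filter (· % 4 = 1)) := by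
        refine card_le_card_of_injOn (· / k ^ 2) (fun d hd => ?_) fun a ha b hb hab => ?_
        · obtain ⟨hdX, hd4, e, rfl⟩ := by simpa using hd
          simp only [mem_coe, mem_filter, mem_range, Nat.mul_div_cancel_left e (pow_pos hk 2)]
          exact ⟨Nat.lt_succ_of_le ((Nat.le_div_iff_mul_le (pow_pos hk 2)).2 (by rwa [mul_comm])),
            Nat.mod_four_eq_one_of_sq_mul hd4⟩
        · simp only [mem_coe, mem_filter, mem_range] at ha hb
          exact (Nat.div_left_inj ha.2.2 hb.2.2).1 hab
    _ ≤ X / k ^ 2 / 4 + 1 := by rw [card_filter_mod_four_eq_one]; split_ifs <;> omega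

theorem card_filter_mod_four_not_squarefree_le (X : ℕ) :
    (#(((range (X + 1)).filter (· % 4 = 1)).filter (¬Squarefree ·)) : ℝ) ≤ X / 6 + √X := by
  set Q := X.sqrt
  -- a non-squarefree `d ≡ 1 (mod 4)` is divisible by `p ^ 2` for an odd prime `p ≤ √X`
  have hcover : ((range (X + 1)).filter (· % 4 = 1)).filter (¬Squarefree ·) ⊆
      (Ioo 2 (Q + 1)).biUnion fun k => (range (X + 1)).filter fun d => d % 4 = 1 ∧ k ^ 2 ∣ d := by
    intro d hd
    simp only [mem_filter, mem_range] at hd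
    obtain ⟨⟨hdX, hd4⟩, hsf⟩ := hd
    obtain ⟨p, hp, hpd⟩ : ∃ p, p.Prime ∧ p * p ∣ d := by
      simpa [Nat.squarefree_iff_prime_squarefree] using hsf
    have hp2 : p ≠ 2 := by rintro rfl; omega
    refine mem_biUnion.2 ⟨p, mem_Ioo.2 ⟨lt_of_le_of_ne hp.two_le hp2.symm, ?_⟩,
      mem_filter.2 ⟨mem_range.2 hdX, hd4, by rwa [sq]⟩⟩
    exact Nat.lt_succ_of_le (Nat.le_sqrt.2 ((Nat.le_of_dvd (by omega) hpd).trans (by omega)))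
  calc _ ≤ ((∑ k ∈ Ioo 2 (Q + 1), (X / k ^ 2 / 4 + 1) : ℕ) : ℝ) := by
        exact_mod_cast (card_le_card hcover).trans (card_biUnion_le.trans
          (sum_le_sum fun k hk => card_filter_mod_four_eq_one_sq_dvd_le X (by simp at hk; omega)))
    _ ≤ ∑ k ∈ Ioo 2 (Q + 1), ((X : ℝ) / 4 * ((k : ℝ) ^ 2)⁻¹ + 1) := by
        push_cast
        gcongr with k
        calc ((X / k ^ 2 / 4 : ℕ) : ℝ) ≤ ((X / k ^ 2 : ℕ) : ℝ) / 4 := by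
              exact_mod_cast Nat.cast_div_le
          _ ≤ (X : ℝ) / (k ^ 2 : ℕ) / 4 := by gcongr; exact Nat.cast_div_le
          _ = (X : ℝ) / 4 * ((k : ℝ) ^ 2)⁻¹ := by push_cast; ring
    _ = X / 4 * ∑ k ∈ Ioo 2 (Q + 1), ((k : ℝ) ^ 2)⁻¹ + #(Ioo 2 (Q + 1)) := by
        rw [sum_add_distrib, ← mul_sum]; simp
    _ ≤ X / 4 * (2 / 3) + √X := by
        gcongr
        · exact (sum_Ioo_inv_sq_le 2 (Q + 1)).trans_eq (by norm_num)
        · exact le_trans (by simp; omega) Real.nat_sqrt_le_real_sqrt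
    _ = X / 6 + √X := by ring

theorem le_ncard_squarefree_mod_four {X : ℕ} (hX : 1024 ≤ X) :
    (32 : ℝ)⁻¹ * X ≤ {d : ℕ | d ≤ X ∧ Squarefree d ∧ d % 4 = 1}.ncard := by
  set A := (range (X + 1)).filter (· % 4 = 1)
  have hA : (X : ℝ) / 4 - 1 ≤ #A := by
    have h4 : X / 4 ≤ #A := by rw [card_filter_mod_four_eq_one]; split_ifs <;> omega
    have : (X : ℝ) ≤ 4 * (X / 4 : ℕ) + 3 := by exact_mod_cast (by omega : X ≤ 4 * (X / 4) + 3)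
    linarith [(by exact_mod_cast h4 : ((X / 4 : ℕ) : ℝ) ≤ #A)]
  have hsplit : (#(A.filter Squarefree) : ℝ) + #(A.filter (¬Squarefree ·)) = #A := by
    exact_mod_cast card_filter_add_card_filter_not _
  have hsqrt : √(X : ℝ) ≤ X / 32 := by
    have h32 : (32 : ℝ) ≤ √X := Real.le_sqrt_of_sq_le (by norm_num; exact_mod_cast hX)
    nlinarith [Real.mul_self_sqrt (Nat.cast_nonneg (α := ℝ) X)]
  have hset : {d : ℕ | d ≤ X ∧ Squarefree d ∧ d % 4 = 1} = ↑(A.filter Squarefree) := by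
    ext d; simp [A]; tauto
  rw [hset, Set.ncard_coe_finset]
  have : (1024 : ℝ) ≤ X := by exact_mod_cast hX
  linarith [card_filter_mod_four_not_squarefree_le X]

/-- among squarefree integers, the members of `T⁰` have relative density `0`,
and among squarefree integers `≡ 1 (mod 4)`, the members of `T¹` have relative density `0`;
i.e. almost all real quadratic fields are of the least type. -/
theorem stmt_19 :
    Filter.Tendsto
      (fun X : ℕ =>
        ({d : ℕ | d ≤ X ∧ Squarefree d ∧ d ∈ T0}.ncard : ℝ) /
          ({d : ℕ | d ≤ X ∧ Squarefree d}.ncard : ℝ))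
      Filter.atTop (nhds 0) ∧
    Filter.Tendsto
      (fun X : ℕ =>
        ({d : ℕ | d ≤ X ∧ Squarefree d ∧ d % 4 = 1 ∧ d ∈ T1}.ncard : ℝ) /
          ({d : ℕ | d ≤ X ∧ Squarefree d ∧ d % 4 = 1}.ncard : ℝ))
      Filter.atTop (nhds 0) := by
  have hden : ∀ᶠ X : ℕ in atTop,
      (32 : ℝ)⁻¹ * X ≤ {d : ℕ | d ≤ X ∧ Squarefree d ∧ d % 4 = 1}.ncard :=
    eventually_atTop.2 ⟨1024, fun X hX => le_ncard_squarefree_mod_four hX⟩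
  have hnum (S : ℕ → Set ℕ) (hS : ∀ X, S X ⊆ pellCandidates X.sqrt) :
      ∀ᶠ X : ℕ in atTop, ((S X).ncard : ℝ) ≤ 34560 * (X : ℝ) ^ (3 / 4 : ℝ) * (1 + log X) ^ 2 := by
    filter_upwards [eventually_ge_atTop 1] with X hX
    refine le_trans ?_ (card_pellCandidates_sqrt_le hX)
    exact_mod_cast (Set.ncard_le_ncard (hS X) (finite_toSet _)).trans_eq (Set.ncard_coe_finset _)
  refine ⟨tendsto_div_zero_of_le_rpow_mul_log_sq (by norm_num) (fun _ => Nat.cast_nonneg _)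
      (hnum _ fun X d hd => mem_pellCandidates_of_mem_T0 hd.2.2 hd.1)
      (hden.mono fun X h => h.trans ?_),
    tendsto_div_zero_of_le_rpow_mul_log_sq (by norm_num) (fun _ => Nat.cast_nonneg _)
      (hnum _ fun X d hd => mem_pellCandidates_of_mem_T1 hd.2.2.2 hd.1) hden⟩
  exact Nat.cast_le.2 <| Set.ncard_le_ncard (fun d hd => ⟨hd.1, hd.2.1⟩)
    ((Set.finite_Iic X).subset fun d hd => hd.1)
end
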